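/- Decomposition Lemma: for every iCPL formula A there exist, for each valuation v of the Boolean variables x_a^i occurring in A (each assignment of a truth value to these variables), a Boolean formula b_v and a purely intuitionistic formula A_v (containing no Boolean variables), such that the formula A ↔ ⋁_v (b_v ∧ A_v) is valid, i.e. forced at every world w and every ω in every iCPL-structure. Moreover one may take b_v to be the conjunction of the Boolean variables true under v together with the negations of those false under v. -/

import Mathlib

noncomputable section

/-! Rational probabilities in `(0,1]`. -/
abbrev Prob : Type := {q : ℚ // 0 < q ∧ q ≤ 1}

instance : Mul Prob :=
  ⟨fun a b => ⟨a.1 * b.1, mul_pos a.2.1 b.2.1, by nlinarith [a.2.1, a.2.2, b.2.1, b.2.2]⟩⟩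

def Prob.one : Prob := ⟨1, by norm_num⟩
open MeasureTheory in
/-- The fair-coin (Bernoulli(1/2) product) measure on the Cantor space `2^ℕ`:
the pushforward of the uniform measure on `[0,1)` along the binary-digit map, so
that each cylinder `{ω | ω n = 1}` has measure `1/2` and distinct coordinates are
independent. -/
noncomputable def coinN : Measure (ℕ → Bool) :=
  Measure.map (fun (x : ℝ) (n : ℕ) => decide (Int.floor (x * 2 ^ (n + 1)) % 2 = 1))
    (volume.restrict (Set.Ico (0 : ℝ) 1))
open MeasureTheory in
/-- The fair-coin product measure on the product `(2^ℕ)^𝒜` of Cantor spaces over all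
names: the pushforward of the coin measure on `2^ℕ` along an unpairing, so that each
cylinder `{ω | ω a i = 1}` has measure `1/2` and all coordinates are independent. -/
noncomputable def coinNN : Measure (ℕ → ℕ → Bool) :=
  Measure.map (fun ω a i => ω (Nat.pair a i)) coinN
/-! ## Formulas of intuitionistic counting propositional logic `iCPL`:
`A ::= ⊤ | ⊥ | x_a^i | p | A∧A | A∨A | A→A | C^q_a A`. -/

inductive Form : Type
  | top : Form
  | bot : Form
  | bvar : ℕ → ℕ → Form       -- Boolean propositional variable `x_a^i`
  | pvar : ℕ → Form           -- intuitionistic propositional variable `p`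
  | conj : Form → Form → Form
  | disj : Form → Form → Form
  | imp : Form → Form → Form
  | cnt : Prob → ℕ → Form → Form    -- counting quantifier `C^q_a A` (binding `a`)
deriving DecidableEq

namespace Form

/-- Free names of a formula (`C^q_a` binds the name `a`). -/
def FN : Form → Finset ℕ
  | top => ∅
  | bot => ∅
  | bvar a _ => {a}
  | pvar _ => ∅
  | conj A B => FN A ∪ FN B
  | disj A B => FN A ∪ FN B
  | imp A B => FN A ∪ FN B
  | cnt _ a A => (FN A).erase a

/-- The Boolean variables `(a, i)` occurring in a formula. -/
def bvars : Form → Finset (ℕ × ℕ)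
  | top => ∅
  | bot => ∅
  | bvar a i => {(a, i)}
  | pvar _ => ∅
  | conj A B => bvars A ∪ bvars B
  | disj A B => bvars A ∪ bvars B
  | imp A B => bvars A ∪ bvars B
  | cnt _ _ A => bvars A

end Form

/-- Boolean formulas: built from `⊤, ⊥, x_a^i` using `¬, ∧, ∨` only
(negation `¬b` being `b → ⊥`). -/
inductive IsBool : Form → Prop
  | top : IsBool .top
  | bot : IsBool .bot
  | bvar (a i : ℕ) : IsBool (.bvar a i)
  | neg {b : Form} (h : IsBool b) : IsBool (.imp b .bot)
  | conj {b c : Form} (hb : IsBool b) (hc : IsBool c) : IsBool (.conj b c)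
  | disj {b c : Form} (hb : IsBool b) (hc : IsBool c) : IsBool (.disj b c)

/-- Classical evaluation of a (Boolean) formula under a valuation `ω` (on the
non-Boolean constructors the value is irrelevant and set to `false`). -/
def bevalF (ω : ℕ → ℕ → Bool) : Form → Bool
  | .top => true
  | .bot => false
  | .bvar a i => ω a i
  | .pvar _ => false
  | .conj A B => bevalF ω A && bevalF ω B
  | .disj A B => bevalF ω A || bevalF ω B
  | .imp A B => !bevalF ω A || bevalF ω B
  | .cnt _ _ _ => false

/-- The measure `μ(b)` of the set of valuations satisfying a Boolean formula. -/
noncomputable def muF (b : Form) : ENNReal :=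
  coinNN {ω : ℕ → ℕ → Bool | bevalF ω b = true}

/-! ## Kripke-style `iCPL`-structures and forcing.

Environments are represented as total maps `ω : 𝒜 → 2^ℕ` assigning an element of
the Cantor space to every name (forcing of a formula `A` with `FN(A) ⊆ X` only
depends on the restriction of `ω` to `X`, so this is the forcing relation
`w, ω ⊩^X_M A` for every sufficiently large finite set `X` of names). -/

/-- An `iCPL`-structure `(W, ≼, i)`: a countable set of worlds, preordered, with an
interpretation of the intuitionistic propositional variables as upper subsets. -/
structure ICPLStructure : Type 1 where
  W : Type
  countable : Countable W
  le : W → W → Prop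
  le_refl : ∀ w, le w w
  le_trans : ∀ u v w, le u v → le v w → le u w
  I : ℕ → Set W
  I_up : ∀ p u v, le u v → u ∈ I p → v ∈ I p

/-- `ω + ω'`: update of the environment `ω` at the name `a` by `ω' ∈ 2^ℕ`. -/
def updName (ω : ℕ → ℕ → Bool) (a : ℕ) (ω' : ℕ → Bool) : ℕ → ℕ → Bool :=
  fun b => if b = a then ω' else ω b

/-- The forcing relation `w, ω ⊩_M A`. -/
def Force (M : ICPLStructure) : Form → M.W → (ℕ → ℕ → Bool) → Prop
  | .top, _, _ => True
  | .bot, _, _ => False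
  | .bvar a i, _, ω => ω a i = true
  | .pvar p, w, _ => w ∈ M.I p
  | .conj A B, w, ω => Force M A w ω ∧ Force M B w ω
  | .disj A B, w, ω => Force M A w ω ∨ Force M B w ω
  | .imp A B, w, ω => ∀ w', M.le w w' → Force M A w' ω → Force M B w' ω
  | .cnt q a A, w, ω =>
      ENNReal.ofReal ((q : ℚ) : ℝ) ≤ coinN {ω' : ℕ → Bool | Force M A w (updName ω a ω')}

/-- Purely intuitionistic formulas: those containing no Boolean variable `x_a^i`. -/
def PurelyIntuitionistic : Form → Prop
  | .top => True
  | .bot => True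
  | .bvar _ _ => False
  | .pvar _ => True
  | .conj A B => PurelyIntuitionistic A ∧ PurelyIntuitionistic B
  | .disj A B => PurelyIntuitionistic A ∧ PurelyIntuitionistic B
  | .imp A B => PurelyIntuitionistic A ∧ PurelyIntuitionistic B
  | .cnt _ _ A => PurelyIntuitionistic A

/-- Finite disjunctions and conjunctions of formulas. -/
def bigOrF (l : List Form) : Form := l.foldr Form.disj Form.bot
def bigAndF (l : List Form) : Form := l.foldr Form.conj Form.top

/-- `A ↔ B` as a formula. -/
def iffF (A B : Form) : Form := .conj (.imp A B) (.imp B A)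

/-- A formula is valid when it is forced at every world and environment of every
`iCPL`-structure. -/
def Valid (A : Form) : Prop :=
  ∀ (M : ICPLStructure) (w : M.W) (ω : ℕ → ℕ → Bool), Force M A w ω

/-- The Boolean formula `b_v` characterizing a valuation `v` of the Boolean
variables of `A`: the conjunction of the variables true under `v` and of the
negations (`¬x = x → ⊥`) of those false under `v`. -/
def thOf (A : Form) (v : {p // p ∈ A.bvars} → Bool) : Form :=
  bigAndF ((A.bvars.attach.toList).map
    (fun p => if v p then Form.bvar p.1.1 p.1.2 else .imp (.bvar p.1.1 p.1.2) .bot))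

/-! Substituting `⊤`/`⊥` for the Boolean variables according to an environment `ρ` turns `A`
into a purely intuitionistic formula `A[ρ]` with `w, ω ⊩ A ↔ w ⊩ A[ω]`, and `b_v` is forced
exactly when `ω` agrees with `v` on the variables of `A`; hence `A ↔ ⋁_v (b_v ∧ A[v])`.
The counting quantifier is the only nontrivial case: its body mentions only the bits `x_a^i`,
`i < N`, of the bound name, so the event under `C^q_a` is a union of cylinders of measure `2^-N`,
and "measure `≥ q`" becomes "at least `q·2^N` prefixes of length `N` satisfy the body", a finite
disjunction of finite conjunctions. -/

open MeasureTheory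

def binaryDigits (x : ℝ) (n : ℕ) : Bool := decide (⌊x * 2 ^ (n + 1)⌋ % 2 = 1)

lemma measurable_binaryDigits : Measurable binaryDigits :=
  measurable_pi_lambda _ fun _ =>
    (measurable_from_top (f := fun z : ℤ => decide (z % 2 = 1))).comp
      (Int.measurable_floor.comp (measurable_id.mul_const _))

lemma coinN_eq_map : coinN = (volume.restrict (Set.Ico (0 : ℝ) 1)).map binaryDigits := rfl

lemma floor_mul_two_pow_succ (x : ℝ) (n : ℕ) :
    ⌊x * 2 ^ (n + 1)⌋ = 2 * ⌊x * 2 ^ n⌋ + (binaryDigits x n).toNat := by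
  have hhalf : ⌊x * 2 ^ n⌋ = ⌊x * 2 ^ (n + 1)⌋ / 2 := by
    have h := Int.floor_div_natCast (x * 2 ^ (n + 1)) 2
    push_cast at h
    rw [← h, pow_succ, mul_div_assoc, mul_div_cancel_right₀ _ two_ne_zero]
  rw [hhalf, binaryDigits]
  rcases Int.emod_two_eq (⌊x * 2 ^ (n + 1)⌋) with h | h <;> simp [h] <;> omega

-- Big-endian: `w 0` is the most significant of the `N` digits.
def prefixValue (w : ℕ → Bool) : ℕ → ℕ
  | 0 => 0
  | n + 1 => 2 * prefixValue w n + (w n).toNat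

lemma prefixValue_lt (w : ℕ → Bool) (N : ℕ) : prefixValue w N < 2 ^ N := by
  induction N with
  | zero => simp [prefixValue]
  | succ n ih =>
    rw [prefixValue, pow_succ]
    have := Bool.toNat_le (w n)
    omega

lemma binaryDigits_eq_iff_floor_eq {x : ℝ} (hx : x ∈ Set.Ico (0 : ℝ) 1) (w : ℕ → Bool) (N : ℕ) :
    (∀ i < N, binaryDigits x i = w i) ↔ ⌊x * 2 ^ N⌋ = prefixValue w N := by
  induction N with
  | zero => simpa [prefixValue, Int.floor_eq_zero_iff] using hx
  | succ n ih =>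
    rw [floor_mul_two_pow_succ, prefixValue, Nat.forall_lt_succ_right, ih]
    cases binaryDigits x n <;> cases w n <;> simp <;> omega

lemma floor_mul_eq_iff_mem_Ico {x c : ℝ} (hc : 0 < c) (k : ℤ) :
    ⌊x * c⌋ = k ↔ x ∈ Set.Ico (k / c) ((k + 1) / c) := by
  rw [Int.floor_eq_iff, Set.mem_Ico, div_le_iff₀ hc, lt_div_iff₀ hc]

def prefixOf (N : ℕ) (ω : ℕ → Bool) : Fin N → Bool := fun i => ω i

def padFalse {N : ℕ} (g : Fin N → Bool) : ℕ → Bool :=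
  fun i => if h : i < N then g ⟨i, h⟩ else false

lemma measurable_prefixOf (N : ℕ) : Measurable (prefixOf N) :=
  measurable_pi_lambda _ fun i => measurable_pi_apply (i : ℕ)

lemma prefixOf_eq_iff {N : ℕ} (ω : ℕ → Bool) (g : Fin N → Bool) :
    prefixOf N ω = g ↔ ∀ i < N, ω i = padFalse g i := by
  simp only [funext_iff, prefixOf, padFalse, Fin.forall_iff]
  exact forall₂_congr fun i hi => by simp [hi]

lemma coinN_prefixOf_preimage_singleton {N : ℕ} (g : Fin N → Bool) :
    coinN (prefixOf N ⁻¹' {g}) = (2 ^ N)⁻¹ := by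
  have hmeas : MeasurableSet (binaryDigits ⁻¹' (prefixOf N ⁻¹' {g})) :=
    measurable_binaryDigits (measurable_prefixOf N (measurableSet_singleton g))
  set k := prefixValue (padFalse g) N
  have hpow : (0 : ℝ) < 2 ^ N := by positivity
  have hfloor := fun x : ℝ => floor_mul_eq_iff_mem_Ico (x := x) hpow k
  simp only [Int.cast_natCast] at hfloor
  have hcyl : binaryDigits ⁻¹' (prefixOf N ⁻¹' {g}) ∩ Set.Ico 0 1 =
      Set.Ico ((k : ℝ) / 2 ^ N) ((k + 1) / 2 ^ N) := by
    have hsub : Set.Ico ((k : ℝ) / 2 ^ N) ((k + 1) / 2 ^ N) ⊆ Set.Ico 0 1 := by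
      refine Set.Ico_subset_Ico (by positivity) ((div_le_one hpow).2 ?_)
      exact_mod_cast prefixValue_lt (padFalse g) N
    ext x
    simp only [Set.mem_inter_iff, Set.mem_preimage, Set.mem_singleton_iff, prefixOf_eq_iff]
    constructor
    · rintro ⟨hdig, hx⟩
      exact (hfloor x).1 ((binaryDigits_eq_iff_floor_eq hx _ N).1 hdig)
    · intro hx
      have hx01 := hsub hx
      refine ⟨(binaryDigits_eq_iff_floor_eq hx01 _ N).2 ?_, hx01⟩
      exact (hfloor x).2 hx
  rw [coinN_eq_map, Measure.map_apply measurable_binaryDigits (measurable_prefixOf N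
    (measurableSet_singleton g)), Measure.restrict_apply hmeas, hcyl, Real.volume_Ico,
    add_div, add_sub_cancel_left, one_div, ENNReal.ofReal_inv_of_pos hpow,
    ENNReal.ofReal_pow zero_le_two, ENNReal.ofReal_ofNat]

lemma coinN_prefixOf_preimage {N : ℕ} (D : Finset (Fin N → Bool)) :
    coinN (prefixOf N ⁻¹' D) = D.card / 2 ^ N := by
  rw [← sum_measure_preimage_singleton D fun g _ =>
    measurable_prefixOf N (measurableSet_singleton g)]
  simp [coinN_prefixOf_preimage_singleton, div_eq_mul_inv]

lemma ofReal_le_coinN_prefixOf_preimage_iff {N : ℕ} (q : ℝ) (D : Set (Fin N → Bool)) :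
    ENNReal.ofReal q ≤ coinN (prefixOf N ⁻¹' D) ↔
      ∃ T : Finset (Fin N → Bool), q * 2 ^ N ≤ T.card ∧ ∀ g ∈ T, g ∈ D := by
  classical
  have hD : D = (D.toFinset : Set (Fin N → Bool)) := D.coe_toFinset.symm
  rw [hD, coinN_prefixOf_preimage, ENNReal.ofReal_le_iff_le_toReal
    (ENNReal.div_ne_top (ENNReal.natCast_ne_top _) (by positivity)),
    ENNReal.toReal_div]
  simp only [ENNReal.toReal_natCast, ENNReal.toReal_pow, ENNReal.toReal_ofNat, Finset.mem_coe]
  rw [le_div_iff₀ (by positivity)]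
  constructor
  · exact fun h => ⟨D.toFinset, h, fun _ => id⟩
  · rintro ⟨T, hT, hTD⟩
    exact hT.trans (by exact_mod_cast Finset.card_le_card fun g hg => hTD g hg)

lemma force_bigOrF {M : ICPLStructure} {l : List Form} {w : M.W} {ω : ℕ → ℕ → Bool} :
    Force M (bigOrF l) w ω ↔ ∃ B ∈ l, Force M B w ω := by
  induction l with
  | nil => simp [bigOrF, Force]
  | cons B l ih => simp [bigOrF, Force, ← ih]

lemma force_bigAndF {M : ICPLStructure} {l : List Form} {w : M.W} {ω : ℕ → ℕ → Bool} :
    Force M (bigAndF l) w ω ↔ ∀ B ∈ l, Force M B w ω := by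
  induction l with
  | nil => simp [bigAndF, Force]
  | cons B l ih => simp [bigAndF, Force, ← ih]

lemma purelyIntuitionistic_bigOrF {l : List Form} (h : ∀ B ∈ l, PurelyIntuitionistic B) :
    PurelyIntuitionistic (bigOrF l) := by
  induction l with
  | nil => trivial
  | cons B l ih => exact ⟨h B (by simp), ih fun C hC => h C (by simp [hC])⟩

lemma purelyIntuitionistic_bigAndF {l : List Form} (h : ∀ B ∈ l, PurelyIntuitionistic B) :
    PurelyIntuitionistic (bigAndF l) := by
  induction l with
  | nil => trivial
  | cons B l ih => exact ⟨h B (by simp), ih fun C hC => h C (by simp [hC])⟩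

lemma valid_iffF_of_force_iff {A B : Form}
    (h : ∀ (M : ICPLStructure) (w : M.W) ω, Force M A w ω ↔ Force M B w ω) :
    Valid (iffF A B) :=
  fun M _ ω => ⟨fun w' _ => (h M w' ω).1, fun w' _ => (h M w' ω).2⟩

lemma PurelyIntuitionistic.force_iff {A : Form} (hA : PurelyIntuitionistic A)
    (M : ICPLStructure) (w : M.W) (ω ω' : ℕ → ℕ → Bool) :
    Force M A w ω ↔ Force M A w ω' := by
  induction A generalizing w ω ω' with
  | bvar => exact hA.elim
  | top | bot | pvar => rfl
  | conj A B ihA ihB | disj A B ihA ihB | imp A B ihA ihB =>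
    simp only [Force, ihA hA.1 _ ω ω', ihB hA.2 _ ω ω']
  | cnt q a A ih =>
    have hupd : ∀ ω₁, Force M A w (updName ω a ω₁) ↔ Force M A w (updName ω' a ω₁) :=
      fun ω₁ => ih hA w _ _
    simp only [Force, hupd]

def indexBound (A : Form) : ℕ := A.bvars.sup Prod.snd + 1

lemma snd_lt_indexBound {A : Form} {p : ℕ × ℕ} (hp : p ∈ A.bvars) : p.2 < indexBound A :=
  Nat.lt_succ_of_le (Finset.le_sup (f := Prod.snd) hp)

def instantiate : Form → (ℕ → ℕ → Bool) → Form
  | .top, _ => .top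
  | .bot, _ => .bot
  | .bvar a i, ρ => if ρ a i then .top else .bot
  | .pvar p, _ => .pvar p
  | .conj A B, ρ => .conj (instantiate A ρ) (instantiate B ρ)
  | .disj A B, ρ => .disj (instantiate A ρ) (instantiate B ρ)
  | .imp A B, ρ => .imp (instantiate A ρ) (instantiate B ρ)
  | .cnt q a A, ρ =>
      bigOrF (((Finset.univ.filter
          fun T : Finset (Fin (indexBound A) → Bool) => q.1 * 2 ^ indexBound A ≤ T.card).toList).map
        fun T => bigAndF (T.toList.map fun g => instantiate A (updName ρ a (padFalse g))))

lemma purelyIntuitionistic_instantiate (A : Form) (ρ : ℕ → ℕ → Bool) :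
    PurelyIntuitionistic (instantiate A ρ) := by
  induction A generalizing ρ with
  | top | bot | pvar => trivial
  | bvar a i => simp only [instantiate]; split <;> trivial
  | conj A B ihA ihB | disj A B ihA ihB | imp A B ihA ihB => exact ⟨ihA ρ, ihB ρ⟩
  | cnt q a A ih =>
    refine purelyIntuitionistic_bigOrF fun B hB => ?_
    obtain ⟨T, -, rfl⟩ := List.mem_map.1 hB
    refine purelyIntuitionistic_bigAndF fun C hC => ?_
    obtain ⟨g, -, rfl⟩ := List.mem_map.1 hC
    exact ih _

lemma instantiate_congr (A : Form) {ρ ρ' : ℕ → ℕ → Bool}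
    (h : ∀ p ∈ A.bvars, ρ p.1 p.2 = ρ' p.1 p.2) : instantiate A ρ = instantiate A ρ' := by
  induction A generalizing ρ ρ' with
  | top | bot | pvar => rfl
  | bvar a i => simp only [instantiate, h (a, i) (by simp [Form.bvars])]
  | conj A B ihA ihB | disj A B ihA ihB | imp A B ihA ihB =>
    simp only [instantiate, ihA fun p hp => h p (by simp [Form.bvars, hp]),
      ihB fun p hp => h p (by simp [Form.bvars, hp])]
  | cnt q a A ih =>
    simp only [instantiate]
    congr! 6 with T _ g
    refine ih fun p hp => ?_
    by_cases hpa : p.1 = a <;> simp [updName, hpa, h p hp]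

lemma instantiate_updName_padFalse_prefixOf (A : Form) (ρ : ℕ → ℕ → Bool) (a : ℕ)
    (ω' : ℕ → Bool) :
    instantiate A (updName ρ a (padFalse (prefixOf (indexBound A) ω'))) =
      instantiate A (updName ρ a ω') := by
  refine instantiate_congr A fun p hp => ?_
  by_cases hpa : p.1 = a <;> simp [updName, hpa, padFalse, prefixOf, snd_lt_indexBound hp]

lemma force_instantiate_cnt (M : ICPLStructure) (q : Prob) (a : ℕ) (A : Form)
    (ρ : ℕ → ℕ → Bool) (w : M.W) (ω : ℕ → ℕ → Bool) :
    Force M (instantiate (.cnt q a A) ρ) w ω ↔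
      ∃ T : Finset (Fin (indexBound A) → Bool), q.1 * 2 ^ indexBound A ≤ T.card ∧
        ∀ g ∈ T, Force M (instantiate A (updName ρ a (padFalse g))) w ω := by
  simp [instantiate, force_bigOrF, force_bigAndF]

theorem force_iff_force_instantiate (M : ICPLStructure) (A : Form) (w : M.W)
    (ω : ℕ → ℕ → Bool) : Force M A w ω ↔ Force M (instantiate A ω) w ω := by
  induction A generalizing w ω with
  | top | bot | pvar => rfl
  | bvar a i => cases h : ω a i <;> simp [instantiate, Force, h]
  | conj A B ihA ihB | disj A B ihA ihB | imp A B ihA ihB =>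
    simp only [Force, instantiate, ihA, ihB]
  | cnt q a A ih =>
    have hset : {ω' | Force M A w (updName ω a ω')} = prefixOf (indexBound A) ⁻¹'
        {g | Force M (instantiate A (updName ω a (padFalse g))) w ω} := by
      ext ω'
      simp only [Set.mem_ofPred_eq, Set.mem_preimage, instantiate_updName_padFalse_prefixOf, ih]
      exact (purelyIntuitionistic_instantiate A _).force_iff M w _ ω
    rw [force_instantiate_cnt, Force, hset, ofReal_le_coinN_prefixOf_preimage_iff]
    norm_cast

lemma force_thOf (M : ICPLStructure) (A : Form) (v : {p // p ∈ A.bvars} → Bool) (w : M.W)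
    (ω : ℕ → ℕ → Bool) :
    Force M (thOf A v) w ω ↔ ∀ p : {p // p ∈ A.bvars}, ω p.1.1 p.1.2 = v p := by
  rw [thOf, force_bigAndF]
  simp only [List.mem_map, Finset.mem_toList, Finset.mem_attach, true_and,
    forall_exists_index, forall_apply_eq_imp_iff]
  refine forall_congr' fun p => ?_
  cases v p
  · simp only [Bool.false_eq_true, if_false, Force, imp_false, Bool.not_eq_true]
    exact ⟨fun h => h w (M.le_refl w), fun h _ _ => h⟩
  · simp [Force]

def envOf {A : Form} (v : {p // p ∈ A.bvars} → Bool) : ℕ → ℕ → Bool :=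
  fun a i => if h : (a, i) ∈ A.bvars then v ⟨(a, i), h⟩ else false

lemma instantiate_envOf {A : Form} {v : {p // p ∈ A.bvars} → Bool} {ω : ℕ → ℕ → Bool}
    (h : ∀ p : {p // p ∈ A.bvars}, ω p.1.1 p.1.2 = v p) :
    instantiate A (envOf v) = instantiate A ω :=
  instantiate_congr A fun p hp => by simp [envOf, hp, h ⟨p, hp⟩]

theorem force_iff_exists_thOf (M : ICPLStructure) (A : Form) (w : M.W) (ω : ℕ → ℕ → Bool) :
    Force M A w ω ↔
      ∃ v, Force M (thOf A v) w ω ∧ Force M (instantiate A (envOf v)) w ω := by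
  rw [force_iff_force_instantiate]
  constructor
  · intro hA
    have hv : ∀ p : {p // p ∈ A.bvars}, ω p.1.1 p.1.2 = ω p.1.1 p.1.2 := fun _ => rfl
    exact ⟨_, (force_thOf M A _ w ω).2 hv, by rwa [instantiate_envOf hv]⟩
  · rintro ⟨v, hv, hA⟩
    rwa [instantiate_envOf ((force_thOf M A v w ω).1 hv)] at hA

/-- **Decomposition Lemma.**  For every `iCPL` formula `A` there
exist, for each valuation `v` of the Boolean variables occurring in `A`, purely
intuitionistic formulas `A_v` such that `A ↔ ⋁_v (b_v ∧ A_v)` is valid, where one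
may take for `b_v` the conjunction of the Boolean variables true under `v` together
with the negations of those false under `v`. -/
theorem decomposition_lemma (A : Form) :
    ∃ F : ({p // p ∈ A.bvars} → Bool) → Form,
      (∀ v, PurelyIntuitionistic (F v)) ∧
      Valid (iffF A (bigOrF
        ((Finset.univ : Finset ({p // p ∈ A.bvars} → Bool)).toList.map
          (fun v => Form.conj (thOf A v) (F v))))) := by
  refine ⟨fun v => instantiate A (envOf v), fun v => purelyIntuitionistic_instantiate A _,
    valid_iffF_of_force_iff fun M w ω => ?_⟩
  rw [force_iff_exists_thOf, force_bigOrF]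
  simp only [List.mem_map, Finset.mem_toList, Finset.mem_univ, true_and, exists_exists_eq_and,
    Force]
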